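/- arXiv:1408.6286 — 2 statements merged into one kernel-verified Lean document; each statement's English description precedes it below -/
import Mathlib

section
/- Let A be an m×n totally unimodular matrix and let a_{pq} ≠ 0 be a pivot entry. Let B be the m×m matrix equal to the identity except that its p-th column has entries b_{ip} = -a_{iq}/a_{pq} for i ≠ p and b_{pp} = 1/a_{pq}. Then BA is totally unimodular. -/
lemma snoc_inj {k : ℕ} {α : Type*} {f : Fin k → α} {p : α}
    (hf : Function.Injective f) (hp : ∀ i, f i ≠ p) :
    Function.Injective (Fin.snoc f p : Fin (k+1) → α) := by
  intro a b hab
  induction a using Fin.lastCases with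
  | last =>
    induction b using Fin.lastCases with
    | last => rfl
    | cast j => simp only [Fin.snoc_last, Fin.snoc_castSucc] at hab; exact absurd hab.symm (hp j)
  | cast i =>
    induction b using Fin.lastCases with
    | last => simp only [Fin.snoc_last, Fin.snoc_castSucc] at hab; exact absurd hab (hp i)
    | cast j => simp only [Fin.snoc_castSucc] at hab; exact congrArg _ (hf hab)


/-- A matrix over ℚ is totally unimodular: every square submatrix has determinant 0, 1 or -1. -/
def IsTotallyUnimodular {m n : ℕ} (A : Matrix (Fin m) (Fin n) ℚ) : Prop :=
  ∀ (k : ℕ) (f : Fin k → Fin m) (g : Fin k → Fin n),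
    Function.Injective f → Function.Injective g →
    (A.submatrix f g).det = 0 ∨ (A.submatrix f g).det = 1 ∨ (A.submatrix f g).det = -1

/-- Pivoting a totally unimodular matrix `A` on a nonzero entry `A p q`
(pre-multiplication by the pivoting matrix `B`, whose `p`-th column has entries
`-A i q / A p q` for `i ≠ p` and `1 / A p q` in position `(p,p)`) yields a totally
unimodular matrix `B * A`. -/
theorem stmt13 {m n : ℕ} (A : Matrix (Fin m) (Fin n) ℚ)
    (hA : IsTotallyUnimodular A) (p : Fin m) (q : Fin n) (hpq : A p q ≠ 0)
    (B : Matrix (Fin m) (Fin m) ℚ)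
    (hB : B = Matrix.of fun i j =>
      if j = p then (if i = p then 1 / A p q else -(A i q) / A p q)
      else if i = j then 1 else 0) :
    IsTotallyUnimodular (B * A) := by
  have he : A p q = 1 ∨ A p q = -1 := by
    have h1 := hA 1 (fun _ => p) (fun _ => q)
      (Function.injective_of_subsingleton _) (Function.injective_of_subsingleton _)
    rw [Matrix.det_fin_one] at h1
    simpa [hpq] using h1
  have hinv : (A p q)⁻¹ = A p q := by rcases he with h | h <;> rw [h] <;> norm_num
  -- the entries of B * A
  have hBA : ∀ i j, (B * A) i j =
      if i = p then (A p q)⁻¹ * A p j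
      else A i j - A i q * (A p q)⁻¹ * A p j := by
    intro i j
    rw [Matrix.mul_apply, hB]
    by_cases hi : i = p
    · rw [if_pos hi, Finset.sum_eq_single p]
      · simp [hi, one_div]
      · intro b _ hb
        have h1 : i ≠ b := fun h => hb (h.symm.trans hi)
        simp [hb, h1]
      · simp
    · rw [if_neg hi]
      have key : ∀ b : Fin m, (Matrix.of fun i j =>
          if j = p then (if i = p then 1 / A p q else -(A i q) / A p q)
          else if i = j then 1 else 0) i b * A b j
          = (if b = i then A i j else 0) + (if b = p then -(A i q) * (A p q)⁻¹ * A p j else 0) := by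
        intro b
        simp only [Matrix.of_apply]
        by_cases hbp : b = p
        · rw [if_pos hbp, if_neg hi, if_pos hbp, if_neg (fun h : b = i => hi (h ▸ hbp)),
            hbp]
          ring
        · rw [if_neg hbp, if_neg hbp]
          by_cases hbi : b = i
          · rw [if_pos hbi.symm, if_pos hbi, hbi]; ring
          · rw [if_neg (fun h : i = b => hbi h.symm), if_neg hbi]; ring
      rw [Finset.sum_congr rfl fun b _ => key b, Finset.sum_add_distrib,
        Finset.sum_ite_eq' Finset.univ i, Finset.sum_ite_eq' Finset.univ p]
      simp only [Finset.mem_univ, if_true]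
      ring
  have hBAq : ∀ i, (B * A) i q = if i = p then 1 else 0 := by
    intro i
    rw [hBA]
    by_cases hi : i = p
    · rw [if_pos hi, if_pos hi, inv_mul_cancel₀ hpq]
    · rw [if_neg hi, if_neg hi, mul_assoc, inv_mul_cancel₀ hpq, mul_one, sub_self]
  -- key case: p is in the range of f
  have key : ∀ (k : ℕ) (f : Fin k → Fin m) (g : Fin k → Fin n), Function.Injective f →
      ∀ i₀, f i₀ = p →
      ((B * A).submatrix f g).det = (A p q)⁻¹ * (A.submatrix f g).det := by
    intro k f g hf i₀ hi₀
    set M := A.submatrix f g with hM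
    set M₁ := M.updateRow i₀ ((A p q)⁻¹ • M i₀) with hM₁
    have hdet1 : M₁.det = (A p q)⁻¹ * M.det := by
      rw [hM₁, Matrix.det_updateRow_smul, Matrix.updateRow_eq_self]
    have hdet2 : ((B * A).submatrix f g).det = M₁.det := by
      apply Matrix.det_eq_of_forall_row_eq_smul_add_const
        (fun i => if i = i₀ then 0 else -(A (f i) q)) i₀ (if_pos rfl)
      intro i j
      by_cases hi : i = i₀
      · rw [if_pos hi]
        simp only [Matrix.submatrix_apply, hi, hi₀, hBA, hM₁,
          Matrix.updateRow_self, Pi.smul_apply, smul_eq_mul, hM, Matrix.submatrix_apply]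
        simp
      · have hfi : f i ≠ p := fun h => hi (hf (h.trans hi₀.symm))
        rw [if_neg hi]
        simp only [Matrix.submatrix_apply, hBA, if_neg hfi, hM₁,
          Matrix.updateRow_ne hi, Matrix.updateRow_self, Pi.smul_apply, smul_eq_mul,
          hM, Matrix.submatrix_apply, hi₀]
        ring
    rw [hdet2, hdet1]
  have hsign : ∀ x : ℚ, (x = 0 ∨ x = 1 ∨ x = -1) →
      ((A p q)⁻¹ * x = 0 ∨ (A p q)⁻¹ * x = 1 ∨ (A p q)⁻¹ * x = -1) := by
    intro x hx
    rw [hinv]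
    rcases he with h | h <;> rcases hx with h' | h' | h' <;> rw [h, h'] <;> norm_num
  intro k f g hf hg
  by_cases hp : ∃ i₀, f i₀ = p
  · obtain ⟨i₀, hi₀⟩ := hp
    rw [key k f g hf i₀ hi₀]
    exact hsign _ (hA k f g hf hg)
  · push_neg at hp
    by_cases hq : ∃ j₀, g j₀ = q
    · left
      obtain ⟨j₀, hj₀⟩ := hq
      apply Matrix.det_eq_zero_of_column_eq_zero j₀
      intro i
      simp [Matrix.submatrix_apply, hj₀, hBAq, hp i]
    · push_neg at hq
      set f' : Fin (k+1) → Fin m := Fin.snoc f p with hf'def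
      set g' : Fin (k+1) → Fin n := Fin.snoc g q with hg'def
      have hf' : Function.Injective f' := snoc_inj hf hp
      have hg' : Function.Injective g' := snoc_inj hg hq
      have hfp' : f' (Fin.last k) = p := by simp [hf'def]
      have hdet : ((B * A).submatrix f' g').det = ((B * A).submatrix f g).det := by
        rw [Matrix.det_succ_column _ (Fin.last k)]
        rw [Finset.sum_eq_single (Fin.last k)]
        · have hcol : ((B * A).submatrix f' g') (Fin.last k) (Fin.last k) = 1 := by
            simp [hfp', hg'def, hBAq]
          rw [hcol, Fin.succAbove_last]
          have hsub : ((B * A).submatrix f' g').submatrix Fin.castSucc Fin.castSucc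
              = (B * A).submatrix f g := by
            ext i j
            simp [hf'def, hg'def, Fin.snoc_castSucc]
          rw [hsub, Fin.val_last, ← two_mul, pow_mul]
          norm_num
        · intro i _ hi
          have hcol : ((B * A).submatrix f' g') i (Fin.last k) = 0 := by
            induction i using Fin.lastCases with
            | last => exact absurd rfl hi
            | cast j =>
              simp only [Matrix.submatrix_apply, hf'def, hg'def, Fin.snoc_castSucc,
                Fin.snoc_last, hBAq, if_neg (hp j)]
          rw [hcol, mul_zero, zero_mul]
        · simp
      rw [← hdet, key (k+1) f' g' hf' (Fin.last k) hfp']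
      exact hsign _ (hA (k+1) f' g' hf' hg')
end

section
/- Let A be totally unimodular with nonzero entry a_{pq}, and let B̃ be the identity matrix modified so that its p-th column has entries b̃_{ip} = -a_{iq}/a_{pq} for i ≠ p and b̃_{pp} = 1. Then B̃A is totally unimodular. -/
theorem isTotallyUnimodular_iff_matrix {m n : ℕ} (A : Matrix (Fin m) (Fin n) ℚ) :
    IsTotallyUnimodular A ↔ A.IsTotallyUnimodular := by
  simp only [IsTotallyUnimodular, Matrix.IsTotallyUnimodular, SignType.range_eq,
    Set.mem_insert_iff, Set.mem_singleton_iff]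
  simp [or_comm]

theorem SignType.mem_range_cast_of_mul {R : Type*} [Ring R] {a d : R}
    (ha : a ∈ Set.range SignType.cast) (ha₀ : a ≠ 0) (had : a * d ∈ Set.range SignType.cast) :
    d ∈ Set.range (SignType.cast : SignType → R) := by
  obtain ⟨s, rfl⟩ := ha
  obtain ⟨t, ht⟩ := had
  have hs : s * s = 1 := by cases s <;> simp_all
  refine ⟨s * t, ?_⟩
  rw [SignType.coe_mul, ht, ← mul_assoc, ← SignType.coe_mul, hs, SignType.coe_one, one_mul]

namespace Matrix

theorem det_eq_mul_det_submatrix_succ_of_apply_succ_zero {R : Type*} [CommRing R] {k : ℕ}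
    (M : Matrix (Fin (k + 1)) (Fin (k + 1)) R) (h : ∀ i : Fin k, M i.succ 0 = 0) :
    M.det = M 0 0 * (M.submatrix Fin.succ Fin.succ).det := by
  rw [det_succ_column_zero, Fin.sum_univ_succ]
  simp [h]

variable {m n K : Type*} [Field K] [DecidableEq m]

def eliminateCol (A : Matrix m n K) (p : m) (q : n) : Matrix m n K :=
  of fun i j => if i = p then A p j else A i j - A i q / A p q * A p j

variable (A : Matrix m n K) (p : m) (q : n)

@[simp]
theorem eliminateCol_apply_pivot (j : n) : A.eliminateCol p q p j = A p j := by
  simp [eliminateCol]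

theorem eliminateCol_apply_of_ne {i : m} (hi : i ≠ p) (j : n) :
    A.eliminateCol p q i j = A i j - A i q / A p q * A p j := by
  simp [eliminateCol, hi]

theorem eliminateCol_apply_col_of_ne (hpq : A p q ≠ 0) {i : m} (hi : i ≠ p) :
    A.eliminateCol p q i q = 0 := by
  rw [eliminateCol_apply_of_ne A p q hi, div_mul_cancel₀ _ hpq, sub_self]

theorem pivotColumn_mul_eq_eliminateCol [Fintype m] :
    (of fun i j => if j = p then (if i = p then 1 else -(A i q) / A p q)
      else if i = j then 1 else 0) * A = A.eliminateCol p q := by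
  ext i j
  by_cases hi : i = p
  · subst hi
    rw [mul_apply, Fintype.sum_eq_single i fun x hx => by simp [hx, Ne.symm hx]]
    simp
  · have hrow : ∀ x, (if x = p then (if i = p then 1 else -(A i q) / A p q)
        else if i = x then 1 else 0) =
          (if x = p then -(A i q) / A p q else 0) + (if i = x then 1 else 0) := by
      intro x
      by_cases hx : x = p <;> simp [hx, hi]
    simp only [mul_apply, of_apply, hrow, add_mul, Finset.sum_add_distrib, ite_mul, zero_mul,
      one_mul, Finset.sum_ite_eq', Finset.sum_ite_eq, Finset.mem_univ, if_true,
      eliminateCol_apply_of_ne _ _ _ hi]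
    ring

theorem det_submatrix_eliminateCol_of_apply_eq {ι : Type*} [Fintype ι] [DecidableEq ι]
    (f : ι → m) (g : ι → n) {i₀ : ι} (hi₀ : f i₀ = p) :
    ((A.eliminateCol p q).submatrix f g).det = (A.submatrix f g).det := by
  refine det_eq_of_forall_row_eq_smul_add_const
    (fun i => if f i = p then 0 else -(A (f i) q / A p q)) i₀ (by simp [hi₀]) fun i j => ?_
  by_cases hi : f i = p
  · simp [hi, hi₀]
  · simp [hi, hi₀, eliminateCol_apply_of_ne _ _ _ hi, sub_eq_add_neg]

theorem det_submatrix_cons_eliminateCol (hpq : A p q ≠ 0) {k : ℕ} (f : Fin k → m)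
    (g : Fin k → n) (hf : ∀ i, f i ≠ p) :
    ((A.eliminateCol p q).submatrix (Fin.cons p f) (Fin.cons q g)).det =
      A p q * ((A.eliminateCol p q).submatrix f g).det := by
  rw [det_eq_mul_det_submatrix_succ_of_apply_succ_zero _
    fun i => by simpa using eliminateCol_apply_col_of_ne A p q hpq (hf i)]
  simp

theorem IsTotallyUnimodular.eliminateCol {A : Matrix m n K} (hA : A.IsTotallyUnimodular)
    {p : m} {q : n} (hpq : A p q ≠ 0) : (A.eliminateCol p q).IsTotallyUnimodular := by
  have hminor := (isTotallyUnimodular_iff A).1 hA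
  rw [isTotallyUnimodular_iff]
  intro k f g
  by_cases hp : ∃ i₀, f i₀ = p
  · obtain ⟨i₀, hi₀⟩ := hp
    rw [det_submatrix_eliminateCol_of_apply_eq A p q f g hi₀]
    exact hminor k f g
  · push Not at hp
    have hext := hminor (k + 1) (Fin.cons p f) (Fin.cons q g)
    rw [← det_submatrix_eliminateCol_of_apply_eq A p q _ _ (i₀ := 0) rfl,
      det_submatrix_cons_eliminateCol A p q hpq f g hp] at hext
    exact SignType.mem_range_cast_of_mul (hA.apply p q) hpq hext

end Matrix

/-- The variant pivot on a totally unimodular matrix `A` at a nonzero entry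
`A p q`, pre-multiplying by the matrix `B̃` whose `p`-th column has entries
`-A i q / A p q` for `i ≠ p` and `1` in position `(p,p)`, yields a totally unimodular
matrix `B̃ * A`. -/
theorem stmt14 {m n : ℕ} (A : Matrix (Fin m) (Fin n) ℚ)
    (hA : IsTotallyUnimodular A) (p : Fin m) (q : Fin n) (hpq : A p q ≠ 0)
    (B : Matrix (Fin m) (Fin m) ℚ)
    (hB : B = Matrix.of fun i j =>
      if j = p then (if i = p then 1 else -(A i q) / A p q)
      else if i = j then 1 else 0) :
    IsTotallyUnimodular (B * A) := by
  rw [isTotallyUnimodular_iff_matrix] at hA ⊢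
  rw [hB, Matrix.pivotColumn_mul_eq_eliminateCol]
  exact hA.eliminateCol hpq
end
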